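/- For an n-cluster tilting subcategory M of mod-Λ with n > 1, the cokernel functor C : S(M) → ←M^{≤1}, sending a monomorphism f : M₁ → M₂ between objects of M to its cokernel, is full, dense and objective. -/

import Mathlib

open CategoryTheory CategoryTheory.Limits Opposite

noncomputable section

namespace Paper

/-! ### Generalities: objective functors, ideals, quotient categories -/

/-- A functor is *objective* if every morphism killed by it factors through an
object killed by it. -/
def Objective {C D : Type*} [Category C] [Category D] [HasZeroMorphisms D]
    (F : C ⥤ D) : Prop :=
  ∀ ⦃X Y : C⦄ (f : X ⟶ Y), F.map f = 0 →
    ∃ (K : C) (g : X ⟶ K) (h : K ⟶ Y), g ≫ h = f ∧ IsZero (F.obj K)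

/-- A functor is *dense* if it is essentially surjective. -/
def Dense {C D : Type*} [Category C] [Category D] (F : C ⥤ D) : Prop :=
  ∀ Y : D, ∃ X : C, Nonempty (F.obj X ≅ Y)

/-- A morphism factors through an object satisfying `K`. -/
def FactorsThru {C : Type*} [Category C] (K : C → Prop) {X Y : C} (f : X ⟶ Y) : Prop :=
  ∃ (Z : C) (g : X ⟶ Z) (h : Z ⟶ Y), K Z ∧ g ≫ h = f

/-- The closure of a class of objects under isomorphism, zero objects and finite
biproducts (direct sums). -/
inductive AddClosure {C : Type*} [Category C] [Preadditive C] (K : C → Prop) : C → Prop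
  | of {X : C} (h : K X) : AddClosure K X
  | zero {X : C} (h : IsZero X) : AddClosure K X
  | biprod {X Y Z : C} (hX : AddClosure K X) (hY : AddClosure K Y)
      (i₁ : X ⟶ Z) (i₂ : Y ⟶ Z) (p₁ : Z ⟶ X) (p₂ : Z ⟶ Y)
      (h₁ : i₁ ≫ p₁ = 𝟙 X) (h₂ : i₂ ≫ p₂ = 𝟙 Y)
      (h : p₁ ≫ i₁ + p₂ ≫ i₂ = 𝟙 Z) : AddClosure K Z

/-- The ideal of morphisms factoring through finite direct sums of objects of `K`,
as a `HomRel`. -/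
def idealRel {C : Type*} [Category C] [Preadditive C] (K : C → Prop) : HomRel C :=
  fun _ _ f g => FactorsThru (AddClosure K) (f - g)

/-- `F : C ⥤ D` induces an equivalence `C/⟨K⟩ ≃ D`. -/
def InducesEquivalence {C D : Type*} [Category C] [Category D] [Preadditive C]
    (K : C → Prop) (F : C ⥤ D) : Prop :=
  ∃ E : Quotient (idealRel K) ⥤ D, Quotient.functor (idealRel K) ⋙ E = F ∧ E.IsEquivalence

/-- Iterates of an endofunctor. -/
def iterFun {C : Type*} [Category C] (F : C ⥤ C) : ℕ → (C ⥤ C)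
  | 0 => 𝟭 C
  | (k + 1) => iterFun F k ⋙ F

/-- The cokernel functor from the morphism category of an abelian category. -/
def cokerFunctor (C : Type*) [Category C] [Abelian C] : ComposableArrows C 1 ⥤ C where
  obj X := cokernel (X.map' 0 1)
  map {X Y} φ := cokernel.map _ _ (φ.app 0) (φ.app 1) (φ.naturality (homOfLE (by decide)))
  map_id X := by apply coequalizer.hom_ext; simp
  map_comp {X Y Z} φ ψ := by apply coequalizer.hom_ext; simp

/-- An object is a direct summand of another. -/
def IsSummand {C : Type*} [Category C] (X Y : C) : Prop :=
  ∃ (s : X ⟶ Y) (r : Y ⟶ X), s ≫ r = 𝟙 X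

/-! ### The module-theoretic set-up -/

variable (Λ : Type) [Ring Λ]

/-- `π : M ⟶ X` is a right `P`-approximation. -/
def IsRightApprox (P : ModuleCat.{0} Λ → Prop) {M X : ModuleCat.{0} Λ} (π : M ⟶ X) : Prop :=
  P M ∧ ∀ N : ModuleCat.{0} Λ, P N → ∀ g : N ⟶ X, ∃ h : N ⟶ M, h ≫ π = g

/-- `ι : X ⟶ M` is a left `P`-approximation. -/
def IsLeftApprox (P : ModuleCat.{0} Λ → Prop) {X M : ModuleCat.{0} Λ} (ι : X ⟶ M) : Prop :=
  P M ∧ ∀ N : ModuleCat.{0} Λ, P N → ∀ g : X ⟶ N, ∃ h : M ⟶ N, ι ≫ h = g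

/-- Vanishing of `Ext^i(X, Y)`. -/
def extZero (i : ℕ) (X Y : ModuleCat.{0} Λ) : Prop :=
  Subsingleton (((Ext ℤ (ModuleCat.{0} Λ) i).obj (op X)).obj Y)

/-- `P` is an `n`-cluster tilting subcategory of `mod-Λ`. -/
structure IsNClusterTilting (n : ℕ) (P : ModuleCat.{0} Λ → Prop) : Prop where
  subcat_fg : ∀ X, P X → Module.Finite Λ X
  closed_iso : ∀ {X Y : ModuleCat.{0} Λ}, (X ≅ Y) → P X → P Y
  closed_biprod : ∀ {X Y : ModuleCat.{0} Λ}, P X → P Y → P (X ⊞ Y)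
  closed_summand : ∀ {X Y : ModuleCat.{0} Λ} (s : X ⟶ Y) (r : Y ⟶ X),
      s ≫ r = 𝟙 X → P Y → P X
  contra_fin : ∀ X : ModuleCat.{0} Λ, Module.Finite Λ X →
      ∃ (M : ModuleCat.{0} Λ) (π : M ⟶ X), IsRightApprox Λ P π
  cov_fin : ∀ X : ModuleCat.{0} Λ, Module.Finite Λ X →
      ∃ (M : ModuleCat.{0} Λ) (ι : X ⟶ M), IsLeftApprox Λ P ι
  generating : ∀ X : ModuleCat.{0} Λ, Module.Finite Λ X →
      ∃ (M : ModuleCat.{0} Λ) (π : M ⟶ X), P M ∧ Epi π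
  cogenerating : ∀ X : ModuleCat.{0} Λ, Module.Finite Λ X →
      ∃ (M : ModuleCat.{0} Λ) (ι : X ⟶ M), P M ∧ Mono ι
  perp_right : ∀ X : ModuleCat.{0} Λ, Module.Finite Λ X →
      ((∀ M : ModuleCat.{0} Λ, P M → ∀ i, 0 < i → i < n → extZero Λ i M X) ↔ P X)
  perp_left : ∀ X : ModuleCat.{0} Λ, Module.Finite Λ X →
      ((∀ M : ModuleCat.{0} Λ, P M → ∀ i, 0 < i → i < n → extZero Λ i X M) ↔ P X)

/-- `Λ` is self-injective: finitely generated projective and injective modules coincide. -/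
def SelfInjective : Prop :=
  ∀ X : ModuleCat.{0} Λ, Module.Finite Λ X → (Projective X ↔ Injective X)

/-- The subcategory `M` as a category. -/
abbrev MCat (P : ModuleCat.{0} Λ → Prop) := ObjectProperty.FullSubcategory P

/-- Contravariant additive functors on `M`: the ambient category of `mod-M`. -/
abbrev DCat (P : ModuleCat.{0} Λ → Prop) := (MCat Λ P)ᵒᵖ ⥤ AddCommGrpCat.{0}

/-- Covariant additive functors on `M`. -/
abbrev DCoCat (P : ModuleCat.{0} Λ → Prop) := MCat Λ P ⥤ AddCommGrpCat.{0}

/-- The restricted Yoneda functor `X ↦ Hom_Λ(-, X)|_M`. -/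
def W (P : ModuleCat.{0} Λ → Prop) : ModuleCat.{0} Λ ⥤ DCat Λ P :=
  preadditiveYoneda ⋙ (Functor.whiskeringLeft _ _ _).obj (ObjectProperty.ι P).op

/-- The restricted co-Yoneda functor `X ↦ Hom_Λ(X, -)|_M`. -/
def Wco (P : ModuleCat.{0} Λ → Prop) : (ModuleCat.{0} Λ)ᵒᵖ ⥤ DCoCat Λ P :=
  preadditiveCoyoneda ⋙ (Functor.whiskeringLeft _ _ _).obj (ObjectProperty.ι P)

/-- A finitely presented contravariant functor on `M`. -/
def FinPres (P : ModuleCat.{0} Λ → Prop) (F : DCat Λ P) : Prop :=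
  ∃ (A B : MCat Λ P) (f : A ⟶ B), Nonempty (F ≅ cokernel (preadditiveYoneda.map f))

/-- A finitely presented covariant functor on `M`. -/
def CoFinPres (P : ModuleCat.{0} Λ → Prop) (G : DCoCat Λ P) : Prop :=
  ∃ (A B : MCat Λ P) (f : A ⟶ B), Nonempty (G ≅ cokernel (preadditiveCoyoneda.map f.op))

/-- A contravariant functor vanishing on projectives. -/
def VanishOnProj (P : ModuleCat.{0} Λ → Prop) (F : DCat Λ P) : Prop :=
  ∀ M : MCat Λ P, Projective M.obj → IsZero (F.obj (op M))

/-- A covariant functor vanishing on injectives. -/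
def VanishOnInj (P : ModuleCat.{0} Λ → Prop) (G : DCoCat Λ P) : Prop :=
  ∀ M : MCat Λ P, Injective M.obj → IsZero (G.obj M)

/-- The category `mod-M̲` of finitely presented contravariant functors on `M`
vanishing on projectives. -/
abbrev Bar (P : ModuleCat.{0} Λ → Prop) :=
  ObjectProperty.FullSubcategory (fun F : DCat Λ P => FinPres Λ P F ∧ VanishOnProj Λ P F)

/-- The category `M̄-mod` of finitely presented covariant functors on `M`
vanishing on injectives. -/
abbrev BarCo (P : ModuleCat.{0} Λ → Prop) :=
  ObjectProperty.FullSubcategory (fun G : DCoCat Λ P => CoFinPres Λ P G ∧ VanishOnInj Λ P G)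

/-! ### Morphism categories -/

/-- The morphism category `H(Λ)` of `mod-Λ`, modelled by composable arrows. -/
abbrev HCat := ComposableArrows (ModuleCat.{0} Λ) 1

/-- The underlying morphism of an object of the morphism category. -/
def arrowHom (f : HCat Λ) : f.obj' 0 ⟶ f.obj' 1 := f.map' 0 1

/-- Membership in the monomorphism category `S(M)`. -/
def SPred (P : ModuleCat.{0} Λ → Prop) (f : HCat Λ) : Prop :=
  P (f.obj' 0) ∧ P (f.obj' 1) ∧ Mono (arrowHom Λ f)

/-- The monomorphism category `S(M)`. -/
abbrev SCat (P : ModuleCat.{0} Λ → Prop) := ObjectProperty.FullSubcategory (SPred Λ P)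

/-- Membership in the epimorphism category `F(M)`. -/
def FPred (P : ModuleCat.{0} Λ → Prop) (f : HCat Λ) : Prop :=
  P (f.obj' 0) ∧ P (f.obj' 1) ∧ Epi (arrowHom Λ f)

/-- The epimorphism category `F(M)`. -/
abbrev FCat (P : ModuleCat.{0} Λ → Prop) := ObjectProperty.FullSubcategory (FPred Λ P)

/-- The functor `S(M) → mod-M`-ambient, `f ↦ Coker M(-, f)`. -/
def UpsilonAmb (P : ModuleCat.{0} Λ → Prop) : SCat Λ P ⥤ DCat Λ P :=
  ObjectProperty.ι _ ⋙ (W Λ P).mapComposableArrows 1 ⋙ cokerFunctor (DCat Λ P)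

/-- The functor `F(M) → mod-M`-ambient, `f ↦ Coker M(-, f)`. -/
def ThetaAmb (P : ModuleCat.{0} Λ → Prop) : FCat Λ P ⥤ DCat Λ P :=
  ObjectProperty.ι _ ⋙ (W Λ P).mapComposableArrows 1 ⋙ cokerFunctor (DCat Λ P)

/-- The cokernel functor `S(Λ) → mod-Λ`. -/
def cokAmb : HCat Λ ⥤ ModuleCat.{0} Λ := cokerFunctor (ModuleCat.{0} Λ)

/-- Modules of proper `M`-dimension at most one. -/
def ProperDimLe1 (P : ModuleCat.{0} Λ → Prop) (X : ModuleCat.{0} Λ) : Prop :=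
  Module.Finite Λ X ∧ ∃ (M₁ M₀ : ModuleCat.{0} Λ) (f : M₁ ⟶ M₀) (g : M₀ ⟶ X),
    P M₁ ∧ P M₀ ∧ Mono f ∧ Epi g ∧ Function.Exact f g ∧
    (∀ N : ModuleCat.{0} Λ, P N → ∀ u : N ⟶ X, ∃ v : N ⟶ M₀, v ≫ g = u)

/-- Finitely presented functors on `M` of projective dimension at most one. -/
def PdLe1 (P : ModuleCat.{0} Λ → Prop) (F : DCat Λ P) : Prop :=
  ∃ (A B : MCat Λ P) (f : A ⟶ B), Mono (preadditiveYoneda.map f) ∧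
    Nonempty (F ≅ cokernel (preadditiveYoneda.map f))

/-! ### `n`-exact sequences -/

/-- A sequence of `Λ`-modules. -/
structure Seq where
  obj : ℕ → ModuleCat.{0} Λ
  map : ∀ i : ℕ, obj i ⟶ obj (i + 1)

/-- `E` is an `n`-exact sequence `0 → E_0 → E_1 → ⋯ → E_{n+1} → 0` in `M`. -/
def IsNExact (P : ModuleCat.{0} Λ → Prop) (n : ℕ) (E : Seq Λ) : Prop :=
  (∀ i ≤ n + 1, P (E.obj i)) ∧
  Mono (E.map 0) ∧ Epi (E.map n) ∧
  (∀ i < n, E.map i ≫ E.map (i + 1) = 0) ∧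
  (∀ i < n, Function.Exact (E.map i) (E.map (i + 1))) ∧
  (∀ N : ModuleCat.{0} Λ, P N → ∀ i < n, ∀ g : N ⟶ E.obj (i + 1),
      g ≫ E.map (i + 1) = 0 → ∃ h : N ⟶ E.obj i, h ≫ E.map i = g) ∧
  (∀ N : ModuleCat.{0} Λ, P N → ∀ i < n, ∀ g : E.obj (i + 1) ⟶ N,
      E.map i ≫ g = 0 → ∃ h : E.obj (i + 2) ⟶ N, E.map (i + 1) ≫ h = g)

/-- The sequence `E` begins with the morphism `f`. -/
def Extends (f : HCat Λ) (E : Seq Λ) : Prop :=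
  ∃ (h0 : E.obj 0 = f.obj' 0) (h1 : E.obj 1 = f.obj' 1),
    E.map 0 = eqToHom h0 ≫ arrowHom Λ f ≫ eqToHom h1.symm

/-- The sequence `E` ends with the morphism `f`, the last map sitting in
degrees `n`, `n+1`. -/
def CoExtends (n : ℕ) (f : HCat Λ) (E : Seq Λ) : Prop :=
  ∃ (h0 : E.obj n = f.obj' 0) (h1 : E.obj (n + 1) = f.obj' 1),
    E.map n = eqToHom h0 ≫ arrowHom Λ f ≫ eqToHom h1.symm

/-- An exact sequence `0 → E_0 → ⋯ → E_{n+1} → 0` of `Λ`-modules. -/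
def ExactSeqN (n : ℕ) (E : Seq Λ) : Prop :=
  Mono (E.map 0) ∧ Epi (E.map n) ∧
  (∀ i < n, E.map i ≫ E.map (i + 1) = 0 ∧ Function.Exact (E.map i) (E.map (i + 1)))

/-- `P` is closed under `n`-th syzygies (the `nℤ`-condition). -/
def NZClosed (P : ModuleCat.{0} Λ → Prop) (n : ℕ) : Prop :=
  ∀ M : ModuleCat.{0} Λ, P M → ∃ E : Seq Λ, ExactSeqN Λ n E ∧ E.obj (n + 1) = M ∧
    P (E.obj 0) ∧ ∀ i, 1 ≤ i → i ≤ n → Projective (E.obj i) ∧ Module.Finite Λ (E.obj i)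

/-! ### Stable Hom-groups and Ext functors -/

/-- Morphisms factoring through a projective module. -/
def projFactorSub (X Y : ModuleCat.{0} Λ) : AddSubgroup (X ⟶ Y) where
  carrier := {f | ∃ (Q : ModuleCat.{0} Λ) (_ : Projective Q) (a : X ⟶ Q) (b : Q ⟶ Y), a ≫ b = f}
  zero_mem' := ⟨Projective.over Y, inferInstance, 0, Projective.π Y, by simp⟩
  add_mem' := by
    rintro f g ⟨Q, hQ, a, b, rfl⟩ ⟨Q', hQ', a', b', rfl⟩
    exact ⟨Q ⊞ Q', by infer_instance, biprod.lift a a', biprod.desc b b', by simp⟩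
  neg_mem' := by
    rintro f ⟨Q, hQ, a, b, rfl⟩
    exact ⟨Q, hQ, a, -b, by simp⟩

/-- Morphisms factoring through an injective module. -/
def injFactorSub (X Y : ModuleCat.{0} Λ) : AddSubgroup (X ⟶ Y) where
  carrier := {f | ∃ (Q : ModuleCat.{0} Λ) (_ : Injective Q) (a : X ⟶ Q) (b : Q ⟶ Y), a ≫ b = f}
  zero_mem' := ⟨Injective.under X, inferInstance, Injective.ι X, 0, by simp⟩
  add_mem' := by
    rintro f g ⟨Q, hQ, a, b, rfl⟩ ⟨Q', hQ', a', b', rfl⟩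
    exact ⟨Q ⊞ Q', by infer_instance, biprod.lift a a', biprod.desc b b', by simp⟩
  neg_mem' := by
    rintro f ⟨Q, hQ, a, b, rfl⟩
    exact ⟨Q, hQ, a, -b, by simp⟩

/-- The stable Hom group `Hom̲(X, Y)`. -/
abbrev stHom (X Y : ModuleCat.{0} Λ) := (X ⟶ Y) ⧸ projFactorSub Λ X Y

/-- The costable Hom group `Hom̄(X, Y)`. -/
abbrev costHom (X Y : ModuleCat.{0} Λ) := (X ⟶ Y) ⧸ injFactorSub Λ X Y

/-- Precomposition as an additive map. -/
def precompHom {X' X Y : ModuleCat.{0} Λ} (f : X' ⟶ X) : (X ⟶ Y) →+ (X' ⟶ Y) :=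
  AddMonoidHom.mk' (fun g => f ≫ g) (fun a b => by simp)

/-- The stable Hom functor `M̲(-, X)` on `M`. -/
def stHomFunctor (P : ModuleCat.{0} Λ → Prop) (X : ModuleCat.{0} Λ) :
    (MCat Λ P)ᵒᵖ ⥤ AddCommGrpCat.{0} where
  obj N := AddCommGrpCat.of (stHom Λ N.unop.obj X)
  map {N N'} f :=
    AddCommGrpCat.ofHom (QuotientAddGroup.map _ _ (precompHom Λ f.unop.hom) (by
      rintro g ⟨Q, hQ, a, b, rfl⟩
      exact ⟨Q, hQ, f.unop.hom ≫ a, b, by simp [precompHom]⟩))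
  map_id N := by
    ext x
    simp [precompHom]
  map_comp {N N' N''} f g := by
    ext x
    simp [precompHom]

/-- Postcomposition as an additive map. -/
def postcompHom {X Y Y' : ModuleCat.{0} Λ} (f : Y ⟶ Y') : (X ⟶ Y) →+ (X ⟶ Y') :=
  AddMonoidHom.mk' (fun g => g ≫ f) (fun a b => by simp)

/-- The costable Hom functor `M̄(X, -)` on `M`. -/
def costHomFunctor (P : ModuleCat.{0} Λ → Prop) (X : ModuleCat.{0} Λ) :
    MCat Λ P ⥤ AddCommGrpCat.{0} where
  obj N := AddCommGrpCat.of (costHom Λ X N.obj)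
  map {N N'} f :=
    AddCommGrpCat.ofHom (QuotientAddGroup.map _ _ (postcompHom Λ f.hom) (by
      rintro g ⟨Q, hQ, a, b, rfl⟩
      exact ⟨Q, hQ, a, b ≫ f.hom, by simp [postcompHom]⟩))
  map_id N := by
    ext x
    simp [postcompHom]
  map_comp {N N' N''} f g := by
    ext x
    simp [postcompHom]

/-- The restricted covariant Ext functor `Ext^k(X, -)|_M`. -/
def extCov (P : ModuleCat.{0} Λ → Prop) (k : ℕ) (X : ModuleCat.{0} Λ) :
    MCat Λ P ⥤ AddCommGrpCat.{0} :=
  ObjectProperty.ι P ⋙ (Ext ℤ (ModuleCat.{0} Λ) k).obj (op X) ⋙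
    forget₂ (ModuleCat ℤ) AddCommGrpCat

/-- The restricted contravariant Ext functor `Ext^k(-, X)|_M`. -/
def extContra (P : ModuleCat.{0} Λ → Prop) (k : ℕ) (X : ModuleCat.{0} Λ) :
    (MCat Λ P)ᵒᵖ ⥤ AddCommGrpCat.{0} :=
  (ObjectProperty.ι P).op ⋙ (Ext ℤ (ModuleCat.{0} Λ) k).flip.obj X ⋙
    forget₂ (ModuleCat ℤ) AddCommGrpCat


/-- Relative projectivity with respect to the proper `M`-exact structure `F_M`. -/
def RelProjective (P : ModuleCat.{0} Λ → Prop) (X : ModuleCat.{0} Λ) : Prop :=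
  ∀ (A B : ModuleCat.{0} Λ), Module.Finite Λ A → Module.Finite Λ B → ∀ g : A ⟶ B, Epi g →
    (∀ N : ModuleCat.{0} Λ, P N → ∀ u : N ⟶ B, ∃ v : N ⟶ A, v ≫ g = u) →
    ∀ u : X ⟶ B, ∃ v : X ⟶ A, v ≫ g = u

end Paper

namespace Paper

/-- An indecomposable module. -/
def Indecomp {A : Type} [Ring A] (N : ModuleCat.{0} A) : Prop :=
  ¬ IsZero N ∧ ∀ (X Y : ModuleCat.{0} A), Nonempty (N ≅ X ⊞ Y) → IsZero X ∨ IsZero Y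

/-- A ring is of finite representation type. -/
def FinRepType (A : Type) [Ring A] : Prop :=
  ∃ (m : ℕ) (I : Fin m → ModuleCat.{0} A), ∀ N : ModuleCat.{0} A,
    Module.Finite A N → Indecomp N → ∃ i, Nonempty (N ≅ I i)

end Paper

/-!
Since `n ≥ 2`, `Ext¹(M, M₁) = 0` for all `M, M₁ ∈ M`, so for a monomorphism `f : M₁ → M₂` in `M`
every map from an object of `M` to `coker f` lifts to `M₂`. Thus `0 → M₁ → M₂ → coker f → 0` is a
proper `M`-resolution, so `C` lands in `←M^{≤1}`; and a map `coker f' → coker f` lifts, through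
`M₂' → coker f'`, to a morphism of arrows, so `C` is full. Density is the definition of
`←M^{≤1}`. If `C(φ) = 0` for `φ : (A₀ → A₁) → (B₀ → B₁)`, then `φ₁` factors through the mono
`B₀ → B₁`, so `φ` factors through the identity arrow of `B₀`, whose cokernel is zero.
-/

namespace Paper

section Abelian

variable {C : Type*} [Category C] [Abelian C]

lemma ProjectiveResolution.exists_d_comp_eq_of_subsingleton_ext [Linear ℤ C]
    [EnoughProjectives C] {N M : C} (R : ProjectiveResolution N)
    [Subsingleton (((Ext ℤ C 1).obj (op N)).obj M)] (w : R.complex.X 1 ⟶ M)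
    (hw : R.complex.d 2 1 ≫ w = 0) : ∃ t : R.complex.X 0 ⟶ M, R.complex.d 1 0 ≫ t = w := by
  have hH : IsZero ((R.complex.linearYonedaObj ℤ M).homology 1) :=
    IsZero.of_iso (ModuleCat.isZero_of_subsingleton _) (R.isoExt 1 M).symm
  have hEx : ((R.complex.linearYonedaObj ℤ M).sc' 0 1 2).Exact :=
    (HomologicalComplex.exactAt_iff' _ 0 1 2 (by simp) (by simp)).1
      ((HomologicalComplex.exactAt_iff_isZero_homology _ _).2 hH)
  exact (ShortComplex.moduleCat_exact_iff _).1 hEx w hw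

/-- Lift a projective cover of `N` to `M₂`; the defect is a 1-cocycle with values in `M₁`,
which is a coboundary since `Ext¹(N, M₁) = 0`. -/
lemma exists_comp_cokernel_π_eq_of_subsingleton_ext [Linear ℤ C] [EnoughProjectives C]
    {M₁ M₂ N : C} (f : M₁ ⟶ M₂) [Mono f] [Subsingleton (((Ext ℤ C 1).obj (op N)).obj M₁)]
    (u : N ⟶ cokernel f) : ∃ v : N ⟶ M₂, v ≫ cokernel.π f = u := by
  let R := projectiveResolution N
  let p : R.complex.X 0 ⟶ N := R.π.f 0
  have hp : R.complex.d 1 0 ≫ p = 0 := R.complex_d_comp_π_f_zero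
  let v₀ : R.complex.X 0 ⟶ M₂ := Projective.factorThru (p ≫ u) (cokernel.π f)
  have hv₀ : v₀ ≫ cokernel.π f = p ≫ u := Projective.factorThru_comp _ _
  have hz : (R.complex.d 1 0 ≫ v₀) ≫ cokernel.π f = 0 := by
    rw [Category.assoc, hv₀, reassoc_of% hp, zero_comp]
  let w : R.complex.X 1 ⟶ M₁ := Abelian.monoLift f _ hz
  have hw : w ≫ f = R.complex.d 1 0 ≫ v₀ := Abelian.monoLift_comp f _ hz
  have hcocycle : R.complex.d 2 1 ≫ w = 0 := by
    rw [← cancel_mono f, Category.assoc, hw, R.complex.d_comp_d_assoc, zero_comp, zero_comp]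
  obtain ⟨t, ht⟩ := ProjectiveResolution.exists_d_comp_eq_of_subsingleton_ext R w hcocycle
  have h0 : R.complex.d 1 0 ≫ (v₀ - t ≫ f) = 0 := by
    rw [Preadditive.comp_sub, reassoc_of% ht, hw, sub_self]
  let v : N ⟶ M₂ := R.exact₀.desc (v₀ - t ≫ f) h0
  have hv : p ≫ v = v₀ - t ≫ f := R.exact₀.g_desc _ h0
  have : Epi p := (inferInstance : Epi (R.π.f 0))
  refine ⟨v, (cancel_epi p).1 ?_⟩
  rw [reassoc_of% hv, Preadditive.sub_comp, Category.assoc, cokernel.condition, comp_zero,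
    sub_zero, hv₀]

lemma cokerFunctor_map_surjective {X Y : ComposableArrows C 1} [Mono (Y.map' 0 1)]
    (hlift : ∀ u : X.obj' 1 ⟶ cokernel (Y.map' 0 1), ∃ v, v ≫ cokernel.π _ = u)
    (g : cokernel (X.map' 0 1) ⟶ cokernel (Y.map' 0 1)) :
    ∃ φ : X ⟶ Y, (cokerFunctor C).map φ = g := by
  obtain ⟨v, hv⟩ := hlift (cokernel.π (X.map' 0 1) ≫ g)
  have hzero : (X.map' 0 1 ≫ v) ≫ cokernel.π (Y.map' 0 1) = 0 := by
    rw [Category.assoc, hv, cokernel.condition_assoc, zero_comp]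
  refine ⟨ComposableArrows.homMk₁ (Abelian.monoLift _ _ hzero) v
    (Abelian.monoLift_comp _ _ hzero).symm, ?_⟩
  exact coequalizer.hom_ext ((cokernel.π_desc _ _ _).trans hv)

lemma exists_factorization_mk₁_id_of_cokerFunctor_map_eq_zero {X Y : ComposableArrows C 1}
    [Mono (Y.map' 0 1)] (φ : X ⟶ Y) (hφ : (cokerFunctor C).map φ = 0) :
    ∃ (g : X ⟶ ComposableArrows.mk₁ (𝟙 (Y.obj' 0)))
      (h : ComposableArrows.mk₁ (𝟙 (Y.obj' 0)) ⟶ Y), g ≫ h = φ := by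
  have hnat : X.map' 0 1 ≫ φ.app 1 = φ.app 0 ≫ Y.map' 0 1 := φ.naturality _
  have h1 : φ.app 1 ≫ cokernel.π (Y.map' 0 1) = 0 :=
    (cokernel.π_desc _ _ _).symm.trans ((cokernel.π (X.map' 0 1)) ≫= hφ |>.trans comp_zero)
  let ψ : X.obj' 1 ⟶ Y.obj' 0 := Abelian.monoLift _ _ h1
  have hψ : ψ ≫ Y.map' 0 1 = φ.app 1 := Abelian.monoLift_comp _ _ h1
  refine ⟨ComposableArrows.homMk₁ (X.map' 0 1 ≫ ψ) ψ (Category.comp_id _).symm,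
    ComposableArrows.homMk₁ (𝟙 _) (Y.map' 0 1) rfl, ComposableArrows.hom_ext₁ ?_ hψ⟩
  show (X.map' 0 1 ≫ ψ) ≫ 𝟙 (Y.obj' 0) = φ.app 0
  rw [Category.comp_id]
  exact (cancel_mono _).1 (by rw [Category.assoc, hψ, hnat])

end Abelian

section ClusterTilting

variable {Λ : Type} [Ring Λ] {n : ℕ} {P : ModuleCat.{0} Λ → Prop}

instance (a : SCat Λ P) : Mono (a.obj.map' 0 1) := a.property.2.2

lemma IsNClusterTilting.exists_comp_cokernel_π_eq (hP : IsNClusterTilting Λ n P) (hn : 1 < n)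
    {M₁ M₂ N : ModuleCat.{0} Λ} (f : M₁ ⟶ M₂) [Mono f] (hM₁ : P M₁) (hN : P N)
    (u : N ⟶ cokernel f) : ∃ v : N ⟶ M₂, v ≫ cokernel.π f = u := by
  have : Subsingleton (((Ext ℤ (ModuleCat.{0} Λ) 1).obj (op N)).obj M₁) :=
    (hP.perp_right M₁ (hP.subcat_fg M₁ hM₁)).mpr hM₁ N hN 1 one_pos hn
  exact exists_comp_cokernel_π_eq_of_subsingleton_ext f u

lemma IsNClusterTilting.properDimLe1_cokernel (hP : IsNClusterTilting Λ n P) (hn : 1 < n)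
    {M₁ M₀ : ModuleCat.{0} Λ} (f : M₁ ⟶ M₀) [Mono f] (h₁ : P M₁) (h₀ : P M₀) :
    ProperDimLe1 Λ P (cokernel f) := by
  have : Module.Finite Λ M₀ := hP.subcat_fg M₀ h₀
  refine ⟨Module.Finite.of_surjective (cokernel.π f).hom
      ((ModuleCat.epi_iff_surjective _).1 inferInstance), M₁, M₀, f, cokernel.π f, h₁, h₀,
    inferInstance, inferInstance, ?_, fun N hN u => hP.exists_comp_cokernel_π_eq hn f h₁ hN u⟩
  exact (ShortComplex.ShortExact.moduleCat_exact_iff_function_exact _).1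
    (ShortComplex.exact_cokernel f)

variable (hn : 1 < n) (hP : IsNClusterTilting Λ n P)

def monoCokernelFunctor : SCat Λ P ⥤ ObjectProperty.FullSubcategory (ProperDimLe1 Λ P) :=
  ObjectProperty.lift _ (ObjectProperty.ι _ ⋙ cokAmb Λ) fun a => by
    show ProperDimLe1 Λ P (cokernel (a.obj.map' 0 1))
    exact hP.properDimLe1_cokernel hn _ a.property.1 a.property.2.1

instance : (monoCokernelFunctor hn hP).Full where
  map_surjective {a b} g := by
    obtain ⟨φ, hφ⟩ := cokerFunctor_map_surjective
      (fun u => hP.exists_comp_cokernel_π_eq hn _ b.property.1 a.property.2.1 u) g.hom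
    exact ⟨ObjectProperty.homMk φ, by ext1; exact hφ⟩

lemma monoCokernelFunctor_dense : Dense (monoCokernelFunctor hn hP) := by
  rintro ⟨Y, -, M₁, M₀, f, g, hM₁, hM₀, hf, hg, hexact, -⟩
  refine ⟨⟨ComposableArrows.mk₁ f, hM₁, hM₀, hf⟩, ⟨ObjectProperty.isoMk _ ?_⟩⟩
  let S := ShortComplex.mk f g (by ext x; exact hexact.apply_apply_eq_zero x)
  have hS : S.Exact := (ShortComplex.ShortExact.moduleCat_exact_iff_function_exact S).2 hexact
  exact (cokernelIsCokernel f).coconePointUniqueUpToIso hS.gIsCokernel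

lemma monoCokernelFunctor_objective : Objective (monoCokernelFunctor hn hP) := by
  intro a b φ hφ
  obtain ⟨g, h, hgh⟩ :=
    exists_factorization_mk₁_id_of_cokerFunctor_map_eq_zero φ.hom congr(($hφ).hom)
  refine ⟨⟨ComposableArrows.mk₁ (𝟙 (b.obj.obj' 0)), b.property.1, b.property.1,
    (inferInstance : Mono (𝟙 (b.obj.obj' 0)))⟩,
    ObjectProperty.homMk g, ObjectProperty.homMk h, by ext1; exact hgh, ?_⟩
  exact IsZero.of_full_of_faithful_of_isZero (ObjectProperty.ι _) _
    (isZero_cokernel_of_epi (𝟙 (b.obj.obj' 0)))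

end ClusterTilting

theorem statement2_general (Λ : Type) [Ring Λ]
    (n : ℕ) (hn : 1 < n) (P : ModuleCat.{0} Λ → Prop)
    (hP : IsNClusterTilting Λ n P) :
    ∃ C : SCat Λ P ⥤ ObjectProperty.FullSubcategory (ProperDimLe1 Λ P),
      Nonempty (C ⋙ ObjectProperty.ι _ ≅ ObjectProperty.ι _ ⋙ cokAmb Λ) ∧
      C.Full ∧ Dense C ∧ Objective C :=
  ⟨monoCokernelFunctor hn hP, ⟨ObjectProperty.liftCompιIso _ _ _⟩, inferInstance,
    monoCokernelFunctor_dense hn hP, monoCokernelFunctor_objective hn hP⟩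

/-- For an `n`-cluster tilting subcategory `M` of `mod-Λ` with
`n > 1`, the cokernel functor `C : S(M) → ←M^{≤1}` is full, dense and objective. -/
theorem statement2 (R : Type) [CommRing R] [IsArtinianRing R]
    (Λ : Type) [Ring Λ] [Algebra R Λ] [Module.Finite R Λ]
    (n : ℕ) (hn : 1 < n) (P : ModuleCat.{0} Λ → Prop)
    (hP : IsNClusterTilting Λ n P) :
    ∃ C : SCat Λ P ⥤ ObjectProperty.FullSubcategory (ProperDimLe1 Λ P),
      Nonempty (C ⋙ ObjectProperty.ι _ ≅ ObjectProperty.ι _ ⋙ cokAmb Λ) ∧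
      C.Full ∧ Dense C ∧ Objective C :=
  statement2_general Λ n hn P hP

end Paper
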